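/- If a Riemann domain π : X → ℂⁿ is exhausted by an increasing family of Stein open subsets X_c = {φ < c}, c ∈ ℝ, such that each pair (X_c, X_b) for c < b is Runge (every f ∈ 𝒪(X_c) is a locally uniform limit of restrictions from 𝒪(X_b)) and hulls stabilize (K̂_{X_c} = K̂_{X_b} for compact K ⋐ X_c), then X itself is Stein. -/

import Mathlib

open Set

/-- A Riemann domain over `ℂⁿ`: a connected topological space `X` together with a
locally homeomorphic (hence, via the charts given by `π` itself, locally biholomorphic)
projection `π : X → ℂⁿ`. -/
structure RiemannDomain (X : Type*) [TopologicalSpace X] (n : ℕ) where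
  π : X → (Fin n → ℂ)
  continuous_π : Continuous π
  connected : ConnectedSpace X
  isLocalHomeomorph : IsLocalHomeomorph π

namespace RiemannDomain

variable {X : Type*} [TopologicalSpace X] {n : ℕ}

/-- `RD.SheetIn Ω r x ρ` : there is a "sheet" inside `Ω` around `x`, i.e. an open set `U ⊆ Ω`
containing `x` on which `π` is injective and whose image is the open polydisc of
multiradius `ρ • r` centered at `π x`. -/
def SheetIn (RD : RiemannDomain X n) (Ω : Set X) (r : Fin n → ℝ) (x : X) (ρ : ℝ) : Prop :=
  ∃ U : Set X, IsOpen U ∧ x ∈ U ∧ U ⊆ Ω ∧ Set.InjOn RD.π U ∧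
    RD.π '' U = {z : Fin n → ℂ | ∀ j, dist (z j) (RD.π x j) < ρ * r j}

/-- `δ` is the boundary distance function of `Ω ⊆ X` with respect to the polydisc of
multiradius `r`: at each point of `Ω` it is the least upper bound of the radii of sheets. -/
def IsBoundaryDistOn (RD : RiemannDomain X n) (Ω : Set X) (r : Fin n → ℝ) (δ : X → ℝ) : Prop :=
  ∀ x ∈ Ω, IsLUB {ρ : ℝ | 0 < ρ ∧ RD.SheetIn Ω r x ρ} (δ x)

/-- A function `f : X → ℂ` is holomorphic on a subset `A` of the Riemann domain `X` if near
every point of `A` it is, read through a sheet of `π`, (the restriction to `A` of) a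
holomorphic function of the base variables. For open `A` this is the usual notion of a
holomorphic function on `A`; for an analytic subset `A` it means local holomorphic
extendability to the ambient space. -/
def HolomorphicOn (RD : RiemannDomain X n) (f : X → ℂ) (A : Set X) : Prop :=
  ∀ x ∈ A, ∃ U : Set X, IsOpen U ∧ x ∈ U ∧ Set.InjOn RD.π U ∧ IsOpen (RD.π '' U) ∧
    ∃ g : (Fin n → ℂ) → ℂ, DifferentiableOn ℂ g (RD.π '' U) ∧ Set.EqOn f (g ∘ RD.π) (U ∩ A)

/-- Holomorphically convex hull of `K` in `Ω` with respect to `𝒪(Ω)`. -/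
def hull (RD : RiemannDomain X n) (Ω K : Set X) : Set X :=
  {x ∈ Ω | ∀ f : X → ℂ, RD.HolomorphicOn f Ω → ‖f x‖ ≤ sSup ((fun y => ‖f y‖) '' K)}

/-- Plurisubharmonicity of `u` on a subset `s ⊆ ℂⁿ`: upper semicontinuity together with the
sub-mean-value inequality on every complex line (on circles whose closed disc stays in `s`). -/
def PlurisubharmonicOn (u : (Fin n → ℂ) → ℝ) (s : Set (Fin n → ℂ)) : Prop :=
  UpperSemicontinuousOn u s ∧
  ∀ z ∈ s, ∀ w : Fin n → ℂ, ∀ R : ℝ, 0 < R →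
    (∀ t : ℂ, ‖t‖ ≤ R → z + t • w ∈ s) →
    u z ≤ (1 / (2 * Real.pi)) *
      ∫ θ in (0:ℝ)..(2 * Real.pi), u (z + ((R : ℂ) * Complex.exp (θ * Complex.I)) • w)

/-- A function `v : X → ℝ` is plurisubharmonic on `Ω ⊆ X` if near every point of `Ω`,
read through a sheet of `π`, it is a plurisubharmonic function of the base variables. -/
def PSHOn (RD : RiemannDomain X n) (v : X → ℝ) (Ω : Set X) : Prop :=
  ∀ x ∈ Ω, ∃ U : Set X, IsOpen U ∧ x ∈ U ∧ U ⊆ Ω ∧ Set.InjOn RD.π U ∧ IsOpen (RD.π '' U) ∧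
    ∃ g : (Fin n → ℂ) → ℝ, PlurisubharmonicOn g (RD.π '' U) ∧ Set.EqOn v (g ∘ RD.π) U

/-- `φ` is an exhaustion function of `X`: all sublevel sets are relatively compact. -/
def IsExhaustion {X : Type*} [TopologicalSpace X] (φ : X → ℝ) : Prop :=
  ∀ c : ℝ, IsCompact (closure {x | φ x < c})

/-- An open set `Ω` of the Riemann domain `X` is Stein if it is holomorphically separable,
possesses global holomorphic local coordinates at every point, and is holomorphically convex. -/
def IsSteinOn (RD : RiemannDomain X n) (Ω : Set X) : Prop :=
  (∀ a ∈ Ω, ∀ b ∈ Ω, a ≠ b → ∃ f : X → ℂ, RD.HolomorphicOn f Ω ∧ f a ≠ f b) ∧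
  (∀ x ∈ Ω, ∃ f : Fin n → (X → ℂ), (∀ j, RD.HolomorphicOn (f j) Ω) ∧
    ∃ U : Set X, IsOpen U ∧ x ∈ U ∧ U ⊆ Ω ∧ Set.InjOn RD.π U ∧ IsOpen (RD.π '' U) ∧
      ∃ g : (Fin n → ℂ) → (Fin n → ℂ), DifferentiableOn ℂ g (RD.π '' U) ∧
        (∀ y ∈ U, (fun j => f j y) = g (RD.π y)) ∧
        Function.Bijective (fderivWithin ℂ g (RD.π '' U) (RD.π x)) ∧
        Set.InjOn g (RD.π '' U)) ∧
  (∀ K : Set X, K ⊆ Ω → IsCompact K → IsCompact (RD.hull Ω K))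

end RiemannDomain

/-- `A` is compactly contained in `B`. -/
def CompactlyContained {X : Type*} [TopologicalSpace X] (A B : Set X) : Prop :=
  IsCompact (closure A) ∧ closure A ⊆ B

namespace RiemannDomain

variable {X : Type*} [TopologicalSpace X] {n : ℕ}

/-- A holomorphic extension of a Riemann domain `(X, π)` over `ℂⁿ`: a Riemann domain
`(Y, π')` with an injection `ι : X → Y` over `ℂⁿ` to which all global holomorphic
functions of `X` extend. -/
structure Extension (RD : RiemannDomain X n) (Y : Type*) [TopologicalSpace Y]
    (RDY : RiemannDomain Y n) where
  ι : X → Y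
  inj : Function.Injective ι
  comm : RDY.π ∘ ι = RD.π
  extends_holo : ∀ f : X → ℂ, RD.HolomorphicOn f Set.univ →
    ∃ g : Y → ℂ, RDY.HolomorphicOn g Set.univ ∧ ∀ x, g (ι x) = f x

/-- `X` is a domain of holomorphy: it admits no holomorphic extension other than itself,
i.e. any holomorphic extension is onto. -/
def IsDomainOfHolomorphy {X : Type u} [TopologicalSpace X] {n : ℕ}
    (RD : RiemannDomain X n) : Prop :=
  ∀ (Y : Type u) (_ : TopologicalSpace Y) (RDY : RiemannDomain Y n)
    (e : RD.Extension Y RDY), Function.Surjective e.ι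

/-- A relatively compact open set `Ω ⋐ X` is strongly pseudoconvex if there are a
neighborhood `U` of `∂Ω` and a `C²` function `φ` on `U` with `Ω ∩ U = {φ < 0}` whose Levi
form (expressed through the charts of `π` by the real Hessian, via
`⟨∂∂̄ψ(z) w, w⟩ = (1/4)(Hψ(z)(w,w) + Hψ(z)(iw,iw))`) is positive definite. -/
def StronglyPseudoconvex (RD : RiemannDomain X n) (Ω : Set X) : Prop :=
  IsOpen Ω ∧ IsCompact (closure Ω) ∧
  ∃ U : Set X, IsOpen U ∧ frontier Ω ⊆ U ∧ ∃ φ : X → ℝ,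
    ({x ∈ U | φ x < 0} = Ω ∩ U) ∧
    ∀ x ∈ U, ∃ V : Set X, IsOpen V ∧ x ∈ V ∧ V ⊆ U ∧ Set.InjOn RD.π V ∧
      IsOpen (RD.π '' V) ∧
      ∃ ψ : (Fin n → ℂ) → ℝ, ContDiffOn ℝ 2 ψ (RD.π '' V) ∧
        Set.EqOn φ (ψ ∘ RD.π) V ∧
        ∀ z ∈ RD.π '' V, ∀ w : Fin n → ℂ, w ≠ 0 →
          0 < (iteratedFDerivWithin ℝ 2 ψ (RD.π '' V) z) ![w, w] +
              (iteratedFDerivWithin ℝ 2 ψ (RD.π '' V) z)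
                ![(Complex.I : ℂ) • w, (Complex.I : ℂ) • w]

/-- `S` is a closed complex submanifold of the open set `Ω ⊆ X`: it is closed in `Ω` and is
locally, through the charts of `π`, the common zero set of finitely many holomorphic
functions with linearly independent differentials. -/
def IsClosedSubmanifoldIn (RD : RiemannDomain X n) (S Ω : Set X) : Prop :=
  S ⊆ Ω ∧ IsClosed (Subtype.val ⁻¹' S : Set Ω) ∧
  ∀ x ∈ S, ∃ U : Set X, IsOpen U ∧ x ∈ U ∧ U ⊆ Ω ∧ Set.InjOn RD.π U ∧ IsOpen (RD.π '' U) ∧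
    ∃ (d : ℕ) (h : Fin d → (Fin n → ℂ) → ℂ),
      (∀ i, DifferentiableOn ℂ (h i) (RD.π '' U)) ∧
      (U ∩ S = {y ∈ U | ∀ i, h i (RD.π y) = 0}) ∧
      LinearIndependent ℂ (fun i => fderivWithin ℂ (h i) (RD.π '' U) (RD.π x))

end RiemannDomain

/-!
Once `(X_c, X)` is a Runge pair for every `c`, separation of points and compactness of hulls pass
from the Stein sets `X_c` to `X`: a function on `X_c` separating two points, or exceeding its
maximum over `K` at a point, is approximated by a global one doing the same, so by stabilization
`K̂_X = K̂_{X_b} = K̂_{X_c}` for `K ⊆ X_c`. The pair `(X_c, X)` is Runge because along levels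
`c = c₀ < c₁ < ⋯ → ∞` with `X_{c_k} ⋐ X_{c_{k+1}}` one can correct a function on `X_{c_k}`
successively with errors `ε / 2^{k+1}` on growing compact sets; the limit converges locally
uniformly, hence is holomorphic by Cauchy estimates on complex lines (Weierstrass in several
variables). Global coordinates come for free from the coordinates of `π`.
-/

open Set Metric Filter Topology

section Weierstrass

variable {E F : Type*} [NormedAddCommGroup E] [NormedSpace ℂ E]
  [NormedAddCommGroup F] [NormedSpace ℂ F]

theorem norm_fderiv_le_of_forall_mem_ball {h : E → F} {z : E} {R C : ℝ} (hR : 0 < R)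
    (hd : DifferentiableOn ℂ h (ball z R)) (hC : ∀ w ∈ ball z R, ‖h w‖ ≤ C) :
    ‖fderiv ℂ h z‖ ≤ 2 * C / R := by
  have hC0 : 0 ≤ C := (norm_nonneg _).trans (hC z (mem_ball_self hR))
  refine ContinuousLinearMap.opNorm_le_of_shell (c := (2 : ℂ)) hR (by positivity)
    (by norm_num) fun v hv hvR => ?_
  have hline : ∀ t ∈ closedBall (0 : ℂ) 1, z + t • v ∈ ball z R := fun t ht => by
    rw [mem_closedBall_zero_iff] at ht
    rw [mem_ball_iff_norm, add_sub_cancel_left, norm_smul]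
    exact (mul_le_of_le_one_left (norm_nonneg v) ht).trans_lt hvR
  have hslice : HasDerivAt (fun t : ℂ => h (z + t • v)) (fderiv ℂ h z v) 0 := by
    have hz : HasFDerivAt h (fderiv ℂ h z) (z + (0 : ℂ) • v) := by
      simpa using (hd.differentiableAt (isOpen_ball.mem_nhds (mem_ball_self hR))).hasFDerivAt
    have hl : HasDerivAt (fun t : ℂ => z + t • v) v 0 := by
      simpa using ((hasDerivAt_id (0 : ℂ)).smul_const v).const_add z
    exact hz.comp_hasDerivAt 0 hl
  have hdiff : DiffContOnCl ℂ (fun t : ℂ => h (z + t • v)) (ball 0 1) := by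
    refine DifferentiableOn.diffContOnCl fun t ht => ?_
    rw [closure_ball _ one_ne_zero] at ht
    exact ((hd.differentiableAt (isOpen_ball.mem_nhds (hline t ht))).comp t
      ((differentiableAt_id.smul_const v).const_add z)).differentiableWithinAt
  have hbound : ‖fderiv ℂ h z v‖ ≤ C := by
    simpa [hslice.deriv] using Complex.norm_deriv_le_of_forall_mem_sphere_norm_le one_pos hdiff
      fun t ht => hC _ (hline t (sphere_subset_closedBall ht))
  calc ‖fderiv ℂ h z v‖ ≤ C := hbound
    _ ≤ 2 * C / R * ‖v‖ := by
      rw [div_mul_eq_mul_div, le_div_iff₀ hR]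
      norm_num at hv
      nlinarith

theorem differentiableOn_of_tendstoLocallyUniformlyOn [ProperSpace E] [CompleteSpace F]
    {f : ℕ → E → F} {g : E → F} {s : Set E} (hs : IsOpen s)
    (hf : ∀ᶠ k in atTop, DifferentiableOn ℂ (f k) s)
    (h : TendstoLocallyUniformlyOn f g atTop s) : DifferentiableOn ℂ g s := by
  intro z₀ hz₀
  obtain ⟨R, hR, hRs⟩ := nhds_basis_closedBall.mem_iff.mp (hs.mem_nhds hz₀)
  have hunif : TendstoUniformlyOn f g atTop (closedBall z₀ R) :=
    (tendstoLocallyUniformlyOn_iff_forall_isCompact hs).mp h _ hRs (isCompact_closedBall _ _)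
  -- Cauchy estimates on balls of radius `R / 2` make the derivatives uniformly Cauchy.
  have hcauchy : UniformCauchySeqOn (fun k => fderiv ℂ (f k)) atTop (ball z₀ (R / 2)) := by
    rw [Metric.uniformCauchySeqOn_iff]
    intro ε hε
    obtain ⟨N₁, hN₁⟩ := Metric.uniformCauchySeqOn_iff.mp hunif.uniformCauchySeqOn
      (ε * R / 8) (by positivity)
    obtain ⟨N₂, hN₂⟩ := eventually_atTop.mp hf
    refine ⟨max N₁ N₂, fun k hk m hm z hz => ?_⟩
    have hball : ball z (R / 2) ⊆ s ∩ closedBall z₀ R := fun w hw =>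
      have hw' : w ∈ closedBall z₀ R := by
        rw [mem_ball] at hz hw; rw [mem_closedBall]
        linarith [dist_triangle w z z₀]
      ⟨hRs hw', hw'⟩
    have hdiff : ∀ j, N₂ ≤ j → DifferentiableOn ℂ (f j) (ball z (R / 2)) := fun j hj =>
      (hN₂ j hj).mono fun w hw => (hball hw).1
    have hderiv : fderiv ℂ (f k - f m) z = fderiv ℂ (f k) z - fderiv ℂ (f m) z := by
      have hzs : s ∈ 𝓝 z := hs.mem_nhds (hball (mem_ball_self (by positivity))).1
      exact fderiv_sub ((hN₂ k (le_of_max_le_right hk)).differentiableAt hzs)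
        ((hN₂ m (le_of_max_le_right hm)).differentiableAt hzs)
    have hest := norm_fderiv_le_of_forall_mem_ball (half_pos hR)
      ((hdiff k (le_of_max_le_right hk)).sub (hdiff m (le_of_max_le_right hm)))
      fun w hw => by
        simpa [dist_eq_norm] using (hN₁ k (le_of_max_le_left hk) m (le_of_max_le_left hm) w
          (hball hw).2).le
    rw [hderiv] at hest
    rw [dist_eq_norm]
    calc _ ≤ 2 * (ε * R / 8) / (R / 2) := hest
      _ < ε := by field_simp; linarith
  set g' : E → E →L[ℂ] F := fun z => limUnder atTop fun k => fderiv ℂ (f k) z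
  have hg' : TendstoUniformlyOn (fun k => fderiv ℂ (f k)) g' atTop (ball z₀ (R / 2)) :=
    hcauchy.tendstoUniformlyOn_of_tendsto fun z hz => (hcauchy.cauchySeq hz).tendsto_limUnder
  have hs₀ : s ∈ 𝓝 z₀ := hs.mem_nhds hz₀
  have hg'z₀ : TendstoUniformlyOnFilter (fun k => fderiv ℂ (f k)) g' atTop (𝓝 z₀) :=
    (tendstoUniformlyOn_iff_tendstoUniformlyOnFilter.mp hg').mono_right
      (le_principal_iff.mpr (ball_mem_nhds z₀ (half_pos hR)))
  refine (hasFDerivAt_of_tendstoUniformlyOnFilter (f := f) hg'z₀ ?_ ?_).differentiableAt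
    |>.differentiableWithinAt
  · filter_upwards [hf.prod_mk (eventually_mem_nhds_iff.mpr hs₀)] with ⟨k, y⟩ ⟨hk, hy⟩
    exact ((hk y (mem_of_mem_nhds hy)).differentiableAt hy).hasFDerivAt
  · filter_upwards [hs₀] with y hy using h.tendsto_at hy

end Weierstrass

section GeometricLimit

variable {α E : Type*} [MetricSpace E] [CompleteSpace E] [Nonempty E]

theorem dist_limUnder_le_of_dist_le_geometric_two {u : ℕ → E} {C : ℝ} {m : ℕ}
    (hu : ∀ k, m ≤ k → dist (u k) (u (k + 1)) ≤ C / 2 / 2 ^ k) {k : ℕ} (hk : m ≤ k) :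
    dist (u k) (limUnder atTop u) ≤ C / 2 ^ k := by
  have hv : ∀ t, dist (u (t + m)) (u (t + 1 + m)) ≤ C / 2 ^ m / 2 / 2 ^ t := fun t => by
    convert hu (t + m) (Nat.le_add_left m t) using 1
    · rw [Nat.add_right_comm]
    · rw [pow_add]; ring
  obtain ⟨a, ha⟩ := cauchySeq_tendsto_of_complete
    (cauchySeq_of_le_geometric_two (f := fun t => u (t + m)) hv)
  rw [((tendsto_add_atTop_iff_nat m).mp ha).limUnder_eq]
  obtain ⟨t, rfl⟩ := Nat.exists_eq_add_of_le' hk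
  convert dist_le_of_le_geometric_two_of_tendsto (f := fun t => u (t + m)) hv ha t using 1
  rw [pow_add]; ring

theorem tendstoUniformlyOn_limUnder_of_dist_le_geometric_two {g : ℕ → α → E} {S : Set α}
    {C : ℝ} {m : ℕ} (hg : ∀ k, m ≤ k → ∀ x ∈ S, dist (g k x) (g (k + 1) x) ≤ C / 2 / 2 ^ k) :
    TendstoUniformlyOn g (fun x => limUnder atTop fun k => g k x) atTop S := by
  have hC : Tendsto (fun k : ℕ => C / 2 ^ k) atTop (𝓝 0) :=
    tendsto_const_nhds.div_atTop (tendsto_pow_atTop_atTop_of_one_lt one_lt_two)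
  rw [Metric.tendstoUniformlyOn_iff]
  intro δ hδ
  filter_upwards [hC.eventually_lt_const hδ, eventually_ge_atTop m] with k hkδ hkm x hx
  rw [dist_comm]
  exact (dist_limUnder_le_of_dist_le_geometric_two (fun j hj => hg j hj x hx) hkm).trans_lt hkδ

end GeometricLimit

theorem UpperSemicontinuous.exists_subset_setOf_lt {X : Type*} [TopologicalSpace X]
    {φ : X → ℝ} (hφ : UpperSemicontinuous φ) {K : Set X} (hK : IsCompact K) :
    ∃ c, K ⊆ {x | φ x < c} :=
  let ⟨M, hM⟩ := (hφ.upperSemicontinuousOn K).bddAbove_of_isCompact hK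
  ⟨M + 1, fun _ hx => (hM (mem_image_of_mem φ hx)).trans_lt (lt_add_one M)⟩

namespace RiemannDomain

variable {X : Type*} [TopologicalSpace X] {n : ℕ} {RD : RiemannDomain X n}
  {f F : X → ℂ} {A B Ω Ω' K : Set X}

def IsRungePair (RD : RiemannDomain X n) (Ω Ω' : Set X) : Prop :=
  ∀ f : X → ℂ, RD.HolomorphicOn f Ω → ∀ K : Set X, IsCompact K → K ⊆ Ω → ∀ ε : ℝ, 0 < ε →
    ∃ g : X → ℂ, RD.HolomorphicOn g Ω' ∧ ∀ x ∈ K, ‖g x - f x‖ ≤ ε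

theorem HolomorphicOn.mono (hf : RD.HolomorphicOn f A) (hBA : B ⊆ A) : RD.HolomorphicOn f B :=
  fun x hx =>
    let ⟨U, hU, hxU, hinj, hop, g, hg, heq⟩ := hf x (hBA hx)
    ⟨U, hU, hxU, hinj, hop, g, hg, heq.mono (inter_subset_inter_right _ hBA)⟩

theorem holomorphicOn_comp_π {g : (Fin n → ℂ) → ℂ} (hg : Differentiable ℂ g) (A : Set X) :
    RD.HolomorphicOn (g ∘ RD.π) A := fun x _ =>
  let ⟨e, hxe, hπ⟩ := RD.isLocalHomeomorph x
  ⟨e.source, e.open_source, hxe, hπ ▸ e.injOn,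
    RD.isLocalHomeomorph.isOpenMap _ e.open_source, g, hg.differentiableOn, fun _ _ => rfl⟩

theorem HolomorphicOn.continuousOn (hA : IsOpen A) (hf : RD.HolomorphicOn f A) :
    ContinuousOn f A := by
  intro x hx
  obtain ⟨U, hU, hxU, -, hop, g, hg, heq⟩ := hf x hx
  have hgx : ContinuousAt g (RD.π x) :=
    ((hg _ ⟨x, hxU, rfl⟩).differentiableAt (hop.mem_nhds ⟨x, hxU, rfl⟩)).continuousAt
  exact (hgx.comp RD.continuous_π.continuousAt).congr
    (Filter.eventuallyEq_of_mem ((hU.inter hA).mem_nhds ⟨hxU, hx⟩) fun y hy => (heq hy).symm)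
    |>.continuousWithinAt

theorem holomorphicOn_iUnion {ι : Sort*} {s : ι → Set X} (hs : ∀ i, IsOpen (s i))
    (hf : ∀ i, RD.HolomorphicOn f (s i)) : RD.HolomorphicOn f (⋃ i, s i) := by
  intro x hx
  obtain ⟨i, hi⟩ := mem_iUnion.mp hx
  obtain ⟨U, hU, hxU, hinj, -, g, hg, heq⟩ := hf i x hi
  refine ⟨U ∩ s i, hU.inter (hs i), ⟨hxU, hi⟩, hinj.mono inter_subset_left,
    RD.isLocalHomeomorph.isOpenMap _ (hU.inter (hs i)), g,
    hg.mono (image_mono inter_subset_left), heq.mono fun y hy => hy.1⟩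

theorem HolomorphicOn.differentiableOn_comp_symm (hΩ : IsOpen Ω) (hf : RD.HolomorphicOn f Ω)
    {e : OpenPartialHomeomorph X (Fin n → ℂ)} (he : RD.π = e) :
    DifferentiableOn ℂ (f ∘ e.symm) (e.target ∩ e.symm ⁻¹' Ω) := by
  rintro z ⟨hz, hzΩ⟩
  obtain ⟨U, hU, hzU, -, hop, g, hg, heq⟩ := hf _ hzΩ
  have hπz : RD.π (e.symm z) = z := by rw [he]; exact e.right_inv hz
  have hW : e.target ∩ e.symm ⁻¹' (U ∩ Ω) ∈ 𝓝 z :=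
    (e.isOpen_inter_preimage_symm (hU.inter hΩ)).mem_nhds ⟨hz, hzU, hzΩ⟩
  have hgz : DifferentiableAt ℂ g z :=
    (hg z ⟨_, hzU, hπz⟩).differentiableAt (hop.mem_nhds ⟨_, hzU, hπz⟩)
  refine (hgz.congr_of_eventuallyEq (Filter.eventuallyEq_of_mem hW ?_)).differentiableWithinAt
  rintro w ⟨hw, hwUΩ⟩
  rw [Function.comp_apply, heq hwUΩ, Function.comp_apply, he, e.right_inv hw]

theorem holomorphicOn_of_differentiableOn_comp_symm (hΩ : IsOpen Ω)
    (h : ∀ x ∈ Ω, ∃ e : OpenPartialHomeomorph X (Fin n → ℂ), x ∈ e.source ∧ RD.π = e ∧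
      DifferentiableOn ℂ (f ∘ e.symm) (e.target ∩ e.symm ⁻¹' Ω)) :
    RD.HolomorphicOn f Ω := by
  intro x hx
  obtain ⟨e, hxe, he, hf⟩ := h x hx
  have himage : RD.π '' (e.source ∩ Ω) = e.target ∩ e.symm ⁻¹' Ω := by
    rw [he, e.image_source_inter_eq']
  refine ⟨e.source ∩ Ω, e.open_source.inter hΩ, ⟨hxe, hx⟩, he ▸ e.injOn.mono inter_subset_left,
    himage ▸ e.isOpen_inter_preimage_symm hΩ, f ∘ e.symm, himage ▸ hf, ?_⟩
  rintro y ⟨⟨hy, -⟩, -⟩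
  rw [Function.comp_apply, Function.comp_apply, he, e.left_inv hy]

theorem HolomorphicOn.of_tendstoLocallyUniformlyOn {f : ℕ → X → ℂ} (hΩ : IsOpen Ω)
    (hf : ∀ᶠ k in atTop, RD.HolomorphicOn (f k) Ω)
    (h : TendstoLocallyUniformlyOn f F atTop Ω) : RD.HolomorphicOn F Ω := by
  refine holomorphicOn_of_differentiableOn_comp_symm hΩ fun x _ => ?_
  obtain ⟨e, hxe, he⟩ := RD.isLocalHomeomorph x
  refine ⟨e, hxe, he, differentiableOn_of_tendstoLocallyUniformlyOn (f := fun k => f k ∘ e.symm)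
    (e.isOpen_inter_preimage_symm hΩ) ?_ ?_⟩
  · filter_upwards [hf] with k hk using hk.differentiableOn_comp_symm hΩ he
  · exact h.comp _ (fun z hz => hz.2) (e.continuousOn_symm.mono inter_subset_left)

theorem IsExhaustion.exists_seq_compactlyContained {φ : X → ℝ} (hex : IsExhaustion φ)
    (hφ : UpperSemicontinuous φ) (c : ℝ) :
    ∃ c' : ℕ → ℝ, c' 0 = c ∧ StrictMono c' ∧
      (∀ k, CompactlyContained {x | φ x < c' k} {x | φ x < c' (k + 1)}) ∧
      ⋃ k, {x | φ x < c' k} = univ := by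
  -- `a + 1 ≤ b` makes the levels tend to infinity.
  have hnext : ∀ a, ∃ b, a + 1 ≤ b ∧ closure {x | φ x < a} ⊆ {x | φ x < b} := fun a =>
    let ⟨b, hb⟩ := hφ.exists_subset_setOf_lt (hex a)
    ⟨max b (a + 1), le_max_right _ _,
      hb.trans fun x (hx : φ x < b) => show φ x < max b (a + 1) from hx.trans_le (le_max_left _ _)⟩
  choose next hnext_ge hnext_sub using hnext
  have hsucc : ∀ k, next^[k + 1] c = next (next^[k] c) := fun k =>
    Function.iterate_succ_apply' next k c
  have hgrowth : ∀ k : ℕ, c + k ≤ next^[k] c := by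
    intro k
    induction k with
    | zero => simp
    | succ k ih => rw [hsucc]; push_cast; linarith [hnext_ge (next^[k] c)]
  refine ⟨fun k => next^[k] c, rfl, strictMono_nat_of_lt_succ fun k => ?_,
    fun k => ⟨hex _, ?_⟩, eq_univ_of_forall fun x => ?_⟩
  · rw [hsucc]; linarith [hnext_ge (next^[k] c)]
  · simp only [hsucc]; exact hnext_sub _
  · obtain ⟨k, hk⟩ := exists_nat_gt (φ x - c)
    exact mem_iUnion.mpr ⟨k, show φ x < next^[k] c by linarith [hgrowth k]⟩

theorem exists_seq_of_isRungePair {Ω M : ℕ → Set X}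
    (hR : ∀ k, RD.IsRungePair (Ω k) (Ω (k + 1))) (hM : ∀ k, IsCompact (M k))
    (hMΩ : ∀ k, M k ⊆ Ω k) {f₀ : X → ℂ} (hf₀ : RD.HolomorphicOn f₀ (Ω 0)) {δ : ℕ → ℝ}
    (hδ : ∀ k, 0 < δ k) :
    ∃ g : ℕ → X → ℂ, g 0 = f₀ ∧ (∀ k, RD.HolomorphicOn (g k) (Ω k)) ∧
      ∀ k, ∀ x ∈ M k, dist (g k x) (g (k + 1) x) ≤ δ k := by
  have step : ∀ k (f : {f : X → ℂ // RD.HolomorphicOn f (Ω k)}),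
      ∃ f' : {f' : X → ℂ // RD.HolomorphicOn f' (Ω (k + 1))},
        ∀ x ∈ M k, dist (f.1 x) (f'.1 x) ≤ δ k := fun k f =>
    let ⟨g, hg, hgf⟩ := hR k f.1 f.2 (M k) (hM k) (hMΩ k) (δ k) (hδ k)
    ⟨⟨g, hg⟩, fun x hx => by rw [dist_comm, dist_eq_norm]; exact hgf x hx⟩
  choose next hnext using step
  let g : ∀ k, {f : X → ℂ // RD.HolomorphicOn f (Ω k)} := fun k => Nat.rec ⟨f₀, hf₀⟩ next k
  exact ⟨fun k => (g k).1, rfl, fun k => (g k).2, fun k => hnext k (g k)⟩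

theorem isRungePair_univ_of_compactlyContained {Ω : ℕ → Set X} (hopen : ∀ k, IsOpen (Ω k))
    (hcc : ∀ k, CompactlyContained (Ω k) (Ω (k + 1))) (hcover : ⋃ k, Ω k = univ)
    (hR : ∀ k, RD.IsRungePair (Ω k) (Ω (k + 1))) : RD.IsRungePair (Ω 0) univ := by
  intro f₀ hf₀ K hK hKΩ ε hε
  have hmono : Monotone Ω := monotone_nat_of_le_succ fun k => subset_closure.trans (hcc k).2
  set M : ℕ → Set X := fun k => K ∪ ⋃ j ∈ Iio k, closure (Ω j)
  have hMmono : Monotone M := fun j k hjk =>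
    union_subset_union_right K (biUnion_subset_biUnion_left (Iio_subset_Iio hjk))
  have hMΩ : ∀ k, M k ⊆ Ω k := fun k => union_subset (hKΩ.trans (hmono k.zero_le))
    (iUnion₂_subset fun j hj => (hcc j).2.trans (hmono (Nat.succ_le_of_lt hj)))
  have hΩM : ∀ k, Ω k ⊆ M (k + 1) := fun k =>
    subset_closure.trans <| (subset_biUnion_of_mem (u := fun j => closure (Ω j))
      (show k ∈ Iio (k + 1) from k.lt_succ_self)).trans subset_union_right
  obtain ⟨g, rfl, hg, hgM⟩ := exists_seq_of_isRungePair hR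
    (fun k => hK.union ((finite_Iio k).isCompact_biUnion fun j _ => (hcc j).1)) hMΩ hf₀
    (δ := fun k => ε / 2 / 2 ^ k) fun k => by positivity
  refine ⟨fun x => limUnder atTop fun k => g k x, ?_, fun x hx => ?_⟩
  · rw [← hcover]
    refine holomorphicOn_iUnion hopen fun m => .of_tendstoLocallyUniformlyOn (hopen m)
      (eventually_atTop.mpr ⟨m, fun k hk => (hg k).mono (hmono hk)⟩) ?_
    exact (tendstoUniformlyOn_limUnder_of_dist_le_geometric_two (m := m + 1)
      fun k hk x hx => hgM k x (hMmono hk hx)).mono (hΩM m) |>.tendstoLocallyUniformlyOn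
  · rw [← dist_eq_norm, dist_comm]
    simpa using dist_limUnder_le_of_dist_le_geometric_two
      (fun k _ => hgM k x (hMmono k.zero_le (subset_union_left hx))) (le_refl 0)

theorem isRungePair_sublevel_univ {φ : X → ℝ} (hex : IsExhaustion φ)
    (hφ : UpperSemicontinuous φ)
    (hR : ∀ c b : ℝ, c < b → RD.IsRungePair {x | φ x < c} {x | φ x < b}) (c : ℝ) :
    RD.IsRungePair {x | φ x < c} univ := by
  obtain ⟨c', rfl, hc', hcc, hcover⟩ := hex.exists_seq_compactlyContained hφ c
  exact isRungePair_univ_of_compactlyContained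
    (fun k => upperSemicontinuous_iff_isOpen_preimage.mp hφ (c' k)) hcc hcover
    fun k => hR _ _ (hc' k.lt_succ_self)

theorem IsSteinOn.isOpen (h : RD.IsSteinOn Ω) : IsOpen Ω :=
  isOpen_iff_forall_mem_open.mpr fun x hx =>
    let ⟨_, _, U, hU, hxU, hUΩ, _⟩ := h.2.1 x hx
    ⟨U, hUΩ, hU, hxU⟩

theorem IsSteinOn.exists_holomorphicOn_ne (hSt : RD.IsSteinOn Ω) (hR : RD.IsRungePair Ω Ω')
    {a b : X} (ha : a ∈ Ω) (hb : b ∈ Ω) (hab : a ≠ b) :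
    ∃ F : X → ℂ, RD.HolomorphicOn F Ω' ∧ F a ≠ F b := by
  obtain ⟨f, hf, hfab⟩ := hSt.1 a ha b hb hab
  have hε : 0 < ‖f a - f b‖ / 3 := by have := norm_pos_iff.mpr (sub_ne_zero.mpr hfab); positivity
  obtain ⟨F, hF, hFf⟩ := hR f hf {a, b} ((isCompact_singleton).insert a)
    (insert_subset ha (singleton_subset_iff.mpr hb)) _ hε
  refine ⟨F, hF, fun hFab => ?_⟩
  have hsep : ‖f a - f b‖ ≤ ‖F b - f b‖ + ‖F a - f a‖ :=
    calc ‖f a - f b‖ = ‖(F b - f b) - (F a - f a)‖ := by rw [hFab]; congr 1; ring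
      _ ≤ ‖F b - f b‖ + ‖F a - f a‖ := norm_sub_le _ _
  linarith [hFf a (mem_insert a _), hFf b (mem_insert_of_mem a rfl)]

theorem exists_holomorphic_coordinates (hΩ : IsOpen Ω) {x : X} (hx : x ∈ Ω) :
    ∃ f : Fin n → (X → ℂ), (∀ j, RD.HolomorphicOn (f j) Ω) ∧
      ∃ U : Set X, IsOpen U ∧ x ∈ U ∧ U ⊆ Ω ∧ InjOn RD.π U ∧ IsOpen (RD.π '' U) ∧
        ∃ g : (Fin n → ℂ) → (Fin n → ℂ), DifferentiableOn ℂ g (RD.π '' U) ∧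
          (∀ y ∈ U, (fun j => f j y) = g (RD.π y)) ∧
          Function.Bijective (fderivWithin ℂ g (RD.π '' U) (RD.π x)) ∧ InjOn g (RD.π '' U) := by
  obtain ⟨e, hxe, he⟩ := RD.isLocalHomeomorph x
  have hU : IsOpen (e.source ∩ Ω) := e.open_source.inter hΩ
  have hπU : IsOpen (RD.π '' (e.source ∩ Ω)) := RD.isLocalHomeomorph.isOpenMap _ hU
  refine ⟨fun j y => RD.π y j, fun j => holomorphicOn_comp_π (differentiable_apply j) Ω,
    e.source ∩ Ω, hU, ⟨hxe, hx⟩, inter_subset_right, he ▸ e.injOn.mono inter_subset_left, hπU,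
    id, differentiableOn_id, fun y _ => rfl, ?_, injOn_id _⟩
  rw [fderivWithin_id (hπU.uniqueDiffWithinAt ⟨x, ⟨hxe, hx⟩, rfl⟩)]
  exact Function.bijective_id

theorem hull_mono (h : Ω ⊆ Ω') : RD.hull Ω K ⊆ RD.hull Ω' K :=
  fun _ ⟨hx, hxK⟩ => ⟨h hx, fun f hf => hxK f (hf.mono h)⟩

theorem IsRungePair.hull_inter_subset (hR : RD.IsRungePair Ω Ω') (hΩ : IsOpen Ω)
    (hK : IsCompact K) (hKΩ : K ⊆ Ω) : RD.hull Ω' K ∩ Ω ⊆ RD.hull Ω K := by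
  rintro x ⟨⟨-, hxK⟩, hx⟩
  refine ⟨hx, fun f hf => le_of_not_gt fun hfx => ?_⟩
  set M := sSup ((fun y => ‖f y‖) '' K)
  have hbdd : BddAbove ((fun y => ‖f y‖) '' K) :=
    (hK.image_of_continuousOn ((hf.continuousOn hΩ).mono hKΩ).norm).bddAbove
  have hM : 0 ≤ M := Real.sSup_nonneg fun _ ⟨_, _, h⟩ => h ▸ norm_nonneg _
  obtain ⟨F, hF, hFf⟩ := hR f hf (insert x K) (hK.insert x) (insert_subset hx hKΩ)
    ((‖f x‖ - M) / 3) (by linarith)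
  have hFK : sSup ((fun y => ‖F y‖) '' K) ≤ M + (‖f x‖ - M) / 3 := by
    refine Real.sSup_le ?_ (by linarith)
    rintro _ ⟨y, hy, rfl⟩
    linarith [norm_le_norm_add_norm_sub' (F y) (f y), le_csSup hbdd (mem_image_of_mem _ hy),
      hFf y (mem_insert_of_mem x hy)]
  linarith [hxK F hF, norm_le_norm_add_norm_sub' (f x) (F x), norm_sub_rev (f x) (F x),
    hFf x (mem_insert x K)]

end RiemannDomain

/-- If a Riemann domain `X` is exhausted by Stein sublevel sets
`X_c = {φ < c}` such that every pair `(X_c, X_b)`, `c < b`, is Runge (uniform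
approximation on compacts) and hulls stabilize, then `X` itself is Stein. -/
theorem stmt_18 {X : Type*} [TopologicalSpace X] {n : ℕ} (RD : RiemannDomain X n)
    (φ : X → ℝ) (hex : RiemannDomain.IsExhaustion φ)
    (hSt : ∀ c : ℝ, RD.IsSteinOn {x | φ x < c})
    (hRunge : ∀ c b : ℝ, c < b → ∀ f : X → ℂ, RD.HolomorphicOn f {x | φ x < c} →
      ∀ K : Set X, IsCompact K → K ⊆ {x | φ x < c} → ∀ ε : ℝ, 0 < ε →
        ∃ g : X → ℂ, RD.HolomorphicOn g {x | φ x < b} ∧ ∀ x ∈ K, ‖g x - f x‖ ≤ ε)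
    (hstab : ∀ c b : ℝ, c < b → ∀ K : Set X, IsCompact K → K ⊆ {x | φ x < c} →
      RD.hull {x | φ x < c} K = RD.hull {x | φ x < b} K) :
    RD.IsSteinOn Set.univ := by
  have hopen : ∀ c, IsOpen {x | φ x < c} := fun c => (hSt c).isOpen
  have hφ : UpperSemicontinuous φ := upperSemicontinuous_iff_isOpen_preimage.mpr hopen
  have hX : ∀ c, RD.IsRungePair {x | φ x < c} univ :=
    RiemannDomain.isRungePair_sublevel_univ hex hφ hRunge
  refine ⟨fun a _ b _ hab => ?_, fun x _ =>
    RiemannDomain.exists_holomorphic_coordinates isOpen_univ (mem_univ x),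
    fun K _ hK => ?_⟩
  · have ha : φ a < max (φ a) (φ b) + 1 := by linarith [le_max_left (φ a) (φ b)]
    have hb : φ b < max (φ a) (φ b) + 1 := by linarith [le_max_right (φ a) (φ b)]
    exact (hSt _).exists_holomorphicOn_ne (hX _) ha hb hab
  · obtain ⟨c, hKc⟩ := hφ.exists_subset_setOf_lt hK
    have hhull : RD.hull univ K ⊆ RD.hull {x | φ x < c} K := fun x hx => by
      have hcb : c < max (φ x) c + 1 := by linarith [le_max_right (φ x) c]
      rw [hstab c _ hcb K hK hKc]
      exact (hX _).hull_inter_subset (hopen _) hK (hKc.trans fun y hy => hy.trans hcb)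
        ⟨hx, show φ x < max (φ x) c + 1 by linarith [le_max_left (φ x) c]⟩
    rw [hhull.antisymm (RiemannDomain.hull_mono (subset_univ _))]
    exact (hSt c).2.2 K hKc hK
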